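/- Let p be an odd prime, m ≥ 1 with p^m ≡ 3 (mod 4), α₀ a non-square in F_{p^m}, and γ ∈ F_{p^m} with γ^4 = -4α₀. Then the quadratic polynomials x^2 + γx + γ^2/2 and x^2 - γx + γ^2/2 are irreducible over F_{p^m}. -/
import Mathlib


open Polynomial

lemma aux_quad_irred {K : Type} [Field K] (h2 : (2 : K) ≠ 0)
    (hneg : ¬ IsSquare (-1 : K)) (δ : K) (hδ : δ ≠ 0) :
    Irreducible (X ^ 2 + C δ * X + C (δ ^ 2 / 2) : K[X]) := by
  have hdeg : (X ^ 2 + C δ * X + C (δ ^ 2 / 2) : K[X]).natDegree = 2 := by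
    compute_degree!
  rw [irreducible_iff_roots_eq_zero_of_degree_le_three (by omega) (by omega)]
  rw [Multiset.eq_zero_iff_forall_notMem]
  intro r hr
  have hne : (X ^ 2 + C δ * X + C (δ ^ 2 / 2) : K[X]) ≠ 0 := by
    intro h; rw [h] at hdeg; simp at hdeg
  rw [mem_roots hne] at hr
  have hr' : r ^ 2 + δ * r + δ ^ 2 / 2 = 0 := by
    have := hr; simpa [IsRoot, eval_add, eval_mul, eval_pow] using this
  have hr2 : 2 * r ^ 2 + 2 * δ * r + δ ^ 2 = 0 := by
    field_simp [h2] at hr'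
    linear_combination hr'
  apply hneg
  refine ⟨(2 * r + δ) / δ, ?_⟩
  field_simp
  linear_combination -2 * hr2

theorem stmt3 (p m : ℕ) (hp : p.Prime) (hodd : Odd p) (hm : 0 < m)
    (K : Type) [Field K] [Fintype K] (hK : Fintype.card K = p ^ m)
    (h3 : p ^ m % 4 = 3) (α₀ : K) (hα₀ : α₀ ≠ 0) (hns : ¬ IsSquare α₀)
    (γ : K) (hγ : γ ^ 4 = -4 * α₀) :
    Irreducible (X ^ 2 + C γ * X + C (γ ^ 2 / 2) : K[X]) ∧
      Irreducible (X ^ 2 - C γ * X + C (γ ^ 2 / 2) : K[X]) := by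
  classical
  have hcard3 : Fintype.card K % 4 = 3 := by rw [hK]; exact h3
  have h2 : (2 : K) ≠ 0 := by
    intro h
    have hd : ringChar K ∣ 2 := ringChar.dvd (by push_cast; exact h)
    have h1 : ringChar K ≠ 1 := CharP.ringChar_ne_one
    rcases (Nat.dvd_prime Nat.prime_two).mp hd with hh | hh
    · exact h1 hh
    · have := FiniteField.even_card_of_char_two hh
      omega
  have hneg : ¬ IsSquare (-1 : K) := by
    rw [FiniteField.isSquare_neg_one_iff]
    simp [hcard3]
  have hγ0 : γ ≠ 0 := by
    intro h
    apply hα₀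
    have : (-4 : K) * α₀ = 0 := by rw [← hγ, h]; ring
    have h4 : (4 : K) ≠ 0 := by
      intro h4; apply h2
      have : (2:K)*2 = 0 := by rw [← h4]; norm_num
      rcases mul_eq_zero.mp this with h|h <;> exact h
    rcases mul_eq_zero.mp this with h|h
    · exact absurd (neg_eq_zero.mp h) h4
    · exact h
  refine ⟨aux_quad_irred h2 hneg γ hγ0, ?_⟩
  have := aux_quad_irred h2 hneg (-γ) (neg_ne_zero.mpr hγ0)
  simpa [sub_eq_add_neg, neg_pow] using this
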